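/- Let d > m ≥ 1 be integers and K ⊂ ℂ^{m+1} a compact set with a_m ≠ 0 for every a = (a₀,…,a_m) ∈ K. Let Q(z,t,a) = t·z^d + a_m z^m + … + a₁ z + a₀. Let θ ∈ ℝ and suppose there exist δ > 0 and R > 0 such that for all (t,a) ∈ [0,1]×K, every root z of Q(·,t,a) with |z| > R satisfies z ∉ {ρ·e^{iφ} : ρ > 0, |φ − θ| < δ (mod 2π)}. Then there exists b > R such that for every (t,a) ∈ [0,1]×K: Q(r·e^{iθ},t,a) ≠ 0 for all r ≥ b, and ∫_{b}^{∞} | (5/16)·(Q'(r e^{iθ},t,a)/Q(r e^{iθ},t,a))² − (1/4)·Q''(r e^{iθ},t,a)/Q(r e^{iθ},t,a) | · |Q(r e^{iθ},t,a)|^{−1/2} dr < 1/2, where ' denotes differentiation in z. -/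

import Mathlib

/-!
Write `Q = c ∏ (z - ζ)` over its roots. On the ray `w = r e^{iθ}` with `r ≥ 2R`, the sector
hypothesis gives `‖w - ζ‖ ≥ κ max(r, ‖ζ‖)` for every root `ζ`, with `κ = sin(min δ (π/2)) / 2`.
Comparing this product with Vieta's formula for `a_m` (via the Mahler measure of `Q(rX)`) gives
`‖Q(w)‖ ≥ κ^d ‖a_m‖ / 2^d`, which compactness of `K` bounds below uniformly. Moreover
`‖Q‖ ≤ 2^d ‖Q(w)‖` on the circle of radius `κ r` about `w`, so Cauchy's estimates give
`‖Q'/Q‖ ≲ 1/r` and `‖Q''/Q‖ ≲ 1/r²` at `w`. The integrand is thus `O(r⁻²)` uniformly and its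
integral over `(b, ∞)` is `O(1/b)`.
-/

open Complex Filter MeasureTheory

/-- The polynomial potential `Q(z,t,a) = t z^d + a_m z^m + … + a₁ z + a₀`. -/
noncomputable def QPot (d m : ℕ) (t : ℝ) (a : Fin (m + 1) → ℂ) (z : ℂ) : ℂ :=
  (t : ℂ) * z ^ d + ∑ j : Fin (m + 1), a j * z ^ (j : ℕ)

namespace Polynomial

theorem norm_eval_eq_mul_prod_roots (P : ℂ[X]) (w : ℂ) :
    ‖P.eval w‖ = ‖P.leadingCoeff‖ * (P.roots.map fun ζ ↦ ‖w - ζ‖).prod := by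
  rw [(IsAlgClosed.splits P).eval_eq_prod_roots, norm_mul]
  exact congrArg _ ((map_multiset_prod (normHom (α := ℂ)) _).trans (by simp [Multiset.map_map]))

theorem mahlerMeasure_comp_C_mul_X (P : ℂ[X]) {r : ℂ} (hr : r ≠ 0) :
    (P.comp (C r * X)).mahlerMeasure =
      ‖P.leadingCoeff‖ * (P.roots.map fun ζ ↦ max ‖r‖ ‖ζ‖).prod := by
  conv_lhs => rw [← C_leadingCoeff_mul_prod_multiset_X_sub_C
    (splits_iff_card_roots.mp (IsAlgClosed.splits P))]
  simp [mul_comp, multiset_prod_comp, mahlerMeasure_mul, Multiset.map_map,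
    sub_eq_add_neg, ← map_neg, mahlerMeasure_C_mul_X_add_C hr]

theorem norm_coeff_mul_pow_le (P : ℂ[X]) (k : ℕ) {r : ℝ} (hr : 0 < r) :
    ‖P.coeff k‖ * r ^ k ≤
      P.natDegree.choose k * (‖P.leadingCoeff‖ * (P.roots.map fun ζ ↦ max r ‖ζ‖).prod) := by
  have h := norm_coeff_le_choose_mul_mahlerMeasure k (P.comp (C (r : ℂ) * X))
  rwa [comp_C_mul_X_coeff, norm_mul, norm_pow, norm_real, Real.norm_of_nonneg hr.le,
    natDegree_comp, natDegree_C_mul_X _ (by exact_mod_cast hr.ne'), mul_one,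
    mahlerMeasure_comp_C_mul_X P (by exact_mod_cast hr.ne'), norm_real,
    Real.norm_of_nonneg hr.le] at h

theorem pow_mul_norm_coeff_mul_pow_le (P : ℂ[X]) (k : ℕ) {w : ℂ} {r κ : ℝ} (hr : 0 < r)
    (hκ : 0 ≤ κ) (hroots : ∀ ζ ∈ P.roots, κ * max r ‖ζ‖ ≤ ‖w - ζ‖) :
    κ ^ P.natDegree * ‖P.coeff k‖ * r ^ k ≤ 2 ^ P.natDegree * ‖P.eval w‖ := by
  set M := (P.roots.map fun ζ ↦ max r ‖ζ‖).prod
  have hM : 0 ≤ M := Multiset.prod_nonneg fun _ hx ↦ by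
    obtain ⟨ζ, -, rfl⟩ := Multiset.mem_map.1 hx
    exact hr.le.trans (le_max_left _ _)
  have hprod : κ ^ P.natDegree * M ≤ (P.roots.map fun ζ ↦ ‖w - ζ‖).prod := by
    rw [← IsAlgClosed.card_roots_eq_natDegree, ← Multiset.prod_replicate,
      ← Multiset.map_const', ← Multiset.prod_map_mul]
    exact Multiset.prod_map_le_prod_map₀ _ _
      (fun ζ _ ↦ mul_nonneg hκ (hr.le.trans (le_max_left _ _))) hroots
  have hcoeff : ‖P.coeff k‖ * r ^ k ≤ 2 ^ P.natDegree * (‖P.leadingCoeff‖ * M) :=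
    (P.norm_coeff_mul_pow_le k hr).trans <| mul_le_mul_of_nonneg_right
      (by exact_mod_cast Nat.choose_le_two_pow _ _) (by positivity)
  rw [norm_eval_eq_mul_prod_roots, mul_assoc]
  calc κ ^ P.natDegree * (‖P.coeff k‖ * r ^ k)
      ≤ κ ^ P.natDegree * (2 ^ P.natDegree * (‖P.leadingCoeff‖ * M)) := by gcongr
    _ = 2 ^ P.natDegree * (‖P.leadingCoeff‖ * (κ ^ P.natDegree * M)) := by ring
    _ ≤ 2 ^ P.natDegree * (‖P.leadingCoeff‖ * (P.roots.map fun ζ ↦ ‖w - ζ‖).prod) := by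
        gcongr

theorem norm_eval_le_two_pow_natDegree_mul (P : ℂ[X]) {w y : ℂ}
    (h : ∀ ζ ∈ P.roots, ‖y - w‖ ≤ ‖w - ζ‖) :
    ‖P.eval y‖ ≤ 2 ^ P.natDegree * ‖P.eval w‖ := by
  have hprod : (P.roots.map fun ζ ↦ ‖y - ζ‖).prod ≤
      2 ^ P.natDegree * (P.roots.map fun ζ ↦ ‖w - ζ‖).prod := by
    rw [← IsAlgClosed.card_roots_eq_natDegree, ← Multiset.prod_replicate,
      ← Multiset.map_const', ← Multiset.prod_map_mul]
    refine Multiset.prod_map_le_prod_map₀ _ _ (fun _ _ ↦ norm_nonneg _) fun ζ hζ ↦ ?_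
    calc ‖y - ζ‖ ≤ ‖y - w‖ + ‖w - ζ‖ := norm_sub_le_norm_sub_add_norm_sub _ _ _
      _ ≤ 2 * ‖w - ζ‖ := by linarith [h ζ hζ]
  rw [norm_eval_eq_mul_prod_roots, norm_eval_eq_mul_prod_roots, mul_left_comm]
  exact mul_le_mul_of_nonneg_left hprod (norm_nonneg _)

theorem norm_iteratedDeriv_eval_le (P : ℂ[X]) (j : ℕ) {w : ℂ} {ρ : ℝ} (hρ : 0 < ρ)
    (h : ∀ ζ ∈ P.roots, ρ ≤ ‖w - ζ‖) :
    ‖iteratedDeriv j (fun z ↦ P.eval z) w‖ ≤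
      j.factorial * (2 ^ P.natDegree * ‖P.eval w‖) / ρ ^ j :=
  Complex.norm_iteratedDeriv_le_of_forall_mem_sphere_norm_le j hρ
    P.differentiable.diffContOnCl fun _ hy ↦
      P.norm_eval_le_two_pow_natDegree_mul fun ζ hζ ↦ (mem_sphere_iff_norm.1 hy).le.trans (h ζ hζ)

theorem norm_deriv_eval_le (P : ℂ[X]) {d : ℕ} (hd : P.natDegree ≤ d) {w : ℂ} {ρ : ℝ}
    (hρ : 0 < ρ) (h : ∀ ζ ∈ P.roots, ρ ≤ ‖w - ζ‖) :
    ‖deriv (fun z ↦ P.eval z) w‖ ≤ 2 ^ (d + 1) / ρ * ‖P.eval w‖ := by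
  have hP := P.norm_iteratedDeriv_eval_le 1 hρ h
  rw [iteratedDeriv_one, Nat.factorial_one, Nat.cast_one, one_mul, pow_one] at hP
  refine hP.trans ?_
  rw [div_mul_eq_mul_div]
  gcongr
  · norm_num
  · omega

theorem norm_deriv_deriv_eval_le (P : ℂ[X]) {d : ℕ} (hd : P.natDegree ≤ d) {w : ℂ} {ρ : ℝ}
    (hρ : 0 < ρ) (h : ∀ ζ ∈ P.roots, ρ ≤ ‖w - ζ‖) :
    ‖deriv (deriv fun z ↦ P.eval z) w‖ ≤ (2 ^ (d + 1) / ρ) ^ 2 * ‖P.eval w‖ := by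
  have hP := P.norm_iteratedDeriv_eval_le 2 hρ h
  rw [iteratedDeriv_succ, iteratedDeriv_one] at hP
  refine hP.trans ?_
  rw [div_pow, div_mul_eq_mul_div, ← pow_mul, ← mul_assoc]
  gcongr ?_ * _ / _
  calc ((Nat.factorial 2 : ℕ) : ℝ) * 2 ^ P.natDegree = 2 ^ (P.natDegree + 1) := by
        norm_num [pow_succ, mul_comm]
    _ ≤ 2 ^ ((d + 1) * 2) := pow_le_pow_right₀ (by norm_num) (by omega)

end Polynomial

theorem Real.cos_le_cos_of_forall_le_abs_sub_two_pi_mul {δ ψ : ℝ} (hδ : 0 ≤ δ)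
    (h : ∀ k : ℤ, δ ≤ |ψ - 2 * Real.pi * k|) : Real.cos ψ ≤ Real.cos δ := by
  obtain ⟨hlo, hhi⟩ := sub_toIocDiv_zsmul_mem_Ioc Real.two_pi_pos (-Real.pi) ψ
  set k := toIocDiv Real.two_pi_pos (-Real.pi) ψ
  rw [zsmul_eq_mul] at hlo hhi
  calc Real.cos ψ = Real.cos |ψ - 2 * Real.pi * k| := by
        rw [Real.cos_abs, mul_comm (2 * Real.pi), Real.cos_sub_int_mul_two_pi]
    _ ≤ Real.cos δ := Real.cos_le_cos_of_nonneg_of_le_pi hδ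
        (abs_le.2 ⟨by linarith, by linarith⟩) (h k)

def openSector (θ δ : ℝ) : Set ℂ :=
  {z | ∃ ρ φ : ℝ, ∃ k : ℤ, 0 < ρ ∧ |φ - θ - 2 * Real.pi * (k : ℝ)| < δ ∧
    z = (ρ : ℂ) * Complex.exp ((φ : ℂ) * Complex.I)}

theorem openSector_mono (θ : ℝ) {δ δ' : ℝ} (h : δ ≤ δ') : openSector θ δ ⊆ openSector θ δ' :=
  fun _ ⟨ρ, φ, k, hρ, hφ, hz⟩ ↦ ⟨ρ, φ, k, hρ, hφ.trans_le h, hz⟩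

theorem norm_ofReal_mul_exp_sub_sq (r θ : ℝ) (ζ : ℂ) :
    ‖(r : ℂ) * exp (θ * I) - ζ‖ ^ 2 = r ^ 2 + ‖ζ‖ ^ 2 - 2 * r * ‖ζ‖ * Real.cos (arg ζ - θ) := by
  conv_lhs => rw [← norm_mul_exp_arg_mul_I ζ]
  rw [Complex.sq_norm, normSq_sub, normSq_apply, normSq_apply]
  simp only [mul_re, mul_im, ofReal_re, ofReal_im, exp_ofReal_mul_I_re, exp_ofReal_mul_I_im,
    conj_re, conj_im, Real.cos_sub]
  nlinarith [Real.sin_sq_add_cos_sq θ, Real.sin_sq_add_cos_sq (arg ζ)]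

theorem sin_mul_max_le_norm_sub_of_notMem_openSector {θ δ r : ℝ} {ζ : ℂ} (hδ₀ : 0 ≤ δ)
    (hδ : δ ≤ Real.pi / 2) (hr : 0 ≤ r) (hζ : ζ ∉ openSector θ δ) :
    Real.sin δ * max r ‖ζ‖ ≤ ‖(r : ℂ) * exp (θ * I) - ζ‖ := by
  have hsin : 0 ≤ Real.sin δ := Real.sin_nonneg_of_nonneg_of_le_pi hδ₀ (by linarith [Real.pi_pos])
  have hcosδ : 0 ≤ Real.cos δ :=
    Real.cos_nonneg_of_neg_pi_div_two_le_of_le (by linarith [Real.pi_pos]) hδ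
  rcases eq_or_ne ζ 0 with rfl | hζ₀
  · simpa [norm_exp_ofReal_mul_I, abs_of_nonneg hr, hr] using
      mul_le_of_le_one_left hr (Real.sin_le_one δ)
  have hcos : Real.cos (arg ζ - θ) ≤ Real.cos δ :=
    Real.cos_le_cos_of_forall_le_abs_sub_two_pi_mul hδ₀ fun k ↦ not_lt.1 fun hk ↦
      hζ ⟨‖ζ‖, arg ζ, k, norm_pos_iff.2 hζ₀, hk, (norm_mul_exp_arg_mul_I ζ).symm⟩
  have hmul : r * ‖ζ‖ * Real.cos (arg ζ - θ) ≤ r * ‖ζ‖ * Real.cos δ :=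
    mul_le_mul_of_nonneg_left hcos (by positivity)
  refine (pow_le_pow_iff_left₀ (by positivity) (norm_nonneg _) two_ne_zero).1 ?_
  rw [norm_ofReal_mul_exp_sub_sq, mul_pow]
  -- with `M, μ` the max and min of `r, ‖ζ‖`: `r² + ‖ζ‖² - 2r‖ζ‖ cos δ - sin² δ M² = (M cos δ - μ)²`
  rcases le_total r ‖ζ‖ with h | h
  · rw [max_eq_right h]
    nlinarith [Real.sin_sq_add_cos_sq δ, sq_nonneg (Real.cos δ * ‖ζ‖ - r)]
  · rw [max_eq_left h]
    nlinarith [Real.sin_sq_add_cos_sq δ, sq_nonneg (Real.cos δ * r - ‖ζ‖)]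

theorem exists_forall_mul_max_le_norm_sub {δ : ℝ} (hδ : 0 < δ) :
    ∃ κ : ℝ, 0 < κ ∧ κ ≤ 1 ∧ ∀ (θ R r : ℝ) (ζ : ℂ), 0 ≤ r → 2 * R ≤ r →
      (R < ‖ζ‖ → ζ ∉ openSector θ δ) → κ * max r ‖ζ‖ ≤ ‖(r : ℂ) * exp (θ * I) - ζ‖ := by
  set δ' := min δ (Real.pi / 2)
  have hδ' : 0 < δ' := lt_min hδ (by linarith [Real.pi_pos])
  have hsin : 0 < Real.sin δ' := Real.sin_pos_of_pos_of_lt_pi hδ'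
    (by linarith [min_le_right δ (Real.pi / 2), Real.pi_pos])
  refine ⟨Real.sin δ' / 2, by positivity, by linarith [Real.sin_le_one δ'],
    fun θ R r ζ hr hRr hζ ↦ ?_⟩
  rcases le_or_gt ‖ζ‖ (r / 2) with hsmall | hlarge
  · have hw : ‖(r : ℂ) * exp (θ * I)‖ = r := by
      rw [norm_mul, norm_exp_ofReal_mul_I, mul_one, norm_real, Real.norm_of_nonneg hr]
    rw [max_eq_left (by linarith [norm_nonneg ζ])]
    nlinarith [norm_sub_norm_le ((r : ℂ) * exp (θ * I)) ζ, Real.sin_le_one δ']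
  · calc Real.sin δ' / 2 * max r ‖ζ‖ ≤ Real.sin δ' * max r ‖ζ‖ := by
          nlinarith [le_max_left r ‖ζ‖]
      _ ≤ _ := sin_mul_max_le_norm_sub_of_notMem_openSector hδ'.le (min_le_right _ _) hr
          fun hs ↦ hζ (by linarith) (openSector_mono θ (min_le_left _ _) hs)

noncomputable def liouvilleIntegrand (f : ℂ → ℂ) (w : ℂ) : ℝ :=
  ‖(5 / 16) * (deriv f w / f w) ^ 2 - (1 / 4) * deriv (deriv f) w / f w‖ *
    ‖f w‖ ^ (-(1 / 2 : ℝ))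

theorem liouvilleIntegrand_le {f : ℂ → ℂ} {w : ℂ} {L c : ℝ} (hc : 0 < c) (hfc : c ≤ ‖f w‖)
    (h₁ : ‖deriv f w‖ ≤ L * ‖f w‖) (h₂ : ‖deriv (deriv f) w‖ ≤ L ^ 2 * ‖f w‖) :
    liouvilleIntegrand f w ≤ L ^ 2 * c ^ (-(1 / 2 : ℝ)) := by
  have hf : 0 < ‖f w‖ := hc.trans_le hfc
  have hq₁ : ‖deriv f w / f w‖ ≤ L := by rwa [norm_div, div_le_iff₀ hf]
  have hq₂ : ‖deriv (deriv f) w / f w‖ ≤ L ^ 2 := by rwa [norm_div, div_le_iff₀ hf]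
  have hcoeff : ‖(5 / 16 : ℂ) * (deriv f w / f w) ^ 2 - (1 / 4) * deriv (deriv f) w / f w‖ ≤
      L ^ 2 := by
    rw [mul_div_assoc]
    refine (norm_sub_le _ _).trans ?_
    rw [norm_mul, norm_mul, norm_pow, show ‖(5 / 16 : ℂ)‖ = 5 / 16 by norm_num,
      show ‖(1 / 4 : ℂ)‖ = 1 / 4 by norm_num]
    nlinarith [pow_le_pow_left₀ (norm_nonneg _) hq₁ 2]
  exact mul_le_mul hcoeff (Real.rpow_le_rpow_of_nonpos hc hfc (by norm_num))
    (by positivity) (by positivity)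

theorem setLIntegral_Ioi_ofReal_le_div {f : ℝ → ℝ} {b C : ℝ} (hb : 0 < b) (hC : 0 ≤ C)
    (hf : ∀ r ∈ Set.Ioi b, f r ≤ C / r ^ 2) :
    ∫⁻ r in Set.Ioi b, ENNReal.ofReal (f r) ≤ ENNReal.ofReal (C / b) := by
  have hpow : ∀ r ∈ Set.Ioi b, C / r ^ 2 = C * r ^ (-2 : ℝ) := fun r hr ↦ by
    rw [Real.rpow_neg (hb.trans hr).le, Real.rpow_two, div_eq_mul_inv]
  calc ∫⁻ r in Set.Ioi b, ENNReal.ofReal (f r)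
      ≤ ∫⁻ r in Set.Ioi b, ENNReal.ofReal (C * r ^ (-2 : ℝ)) :=
        setLIntegral_mono' measurableSet_Ioi fun r hr ↦
          ENNReal.ofReal_le_ofReal ((hf r hr).trans_eq (hpow r hr))
    _ = ENNReal.ofReal (∫ r in Set.Ioi b, C * r ^ (-2 : ℝ)) :=
        (ofReal_integral_eq_lintegral_ofReal
          ((integrableOn_Ioi_rpow_of_lt (by norm_num) hb).const_mul C)
          ((ae_restrict_iff' measurableSet_Ioi).2 (ae_of_all _ fun r hr ↦
            mul_nonneg hC (Real.rpow_nonneg (hb.trans hr).le _)))).symm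
    _ = ENNReal.ofReal (C / b) := by
        rw [integral_const_mul, integral_Ioi_rpow_of_lt (by norm_num) hb]
        norm_num [Real.rpow_neg_one, div_eq_mul_inv]

open Polynomial

noncomputable def qPoly (d m : ℕ) (t : ℝ) (a : Fin (m + 1) → ℂ) : ℂ[X] :=
  C (t : ℂ) * X ^ d + ∑ j : Fin (m + 1), C (a j) * X ^ (j : ℕ)

section qPoly

variable {d m : ℕ} {t : ℝ} {a : Fin (m + 1) → ℂ}

theorem QPot_eq_eval_qPoly : QPot d m t a = fun z ↦ (qPoly d m t a).eval z := by
  funext z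
  simp [QPot, qPoly, eval_finsetSum]

theorem natDegree_qPoly_le (h : m ≤ d) : (qPoly d m t a).natDegree ≤ d := by
  refine natDegree_add_le_of_degree_le (natDegree_C_mul_X_pow_le _ _)
    (natDegree_sum_le_of_forall_le _ _ fun j _ ↦ ?_)
  exact (natDegree_C_mul_X_pow_le _ _).trans (by omega)

theorem coeff_qPoly_self (h : m < d) : (qPoly d m t a).coeff m = a (Fin.last m) := by
  have hlast (j : Fin (m + 1)) : m = j ↔ j = Fin.last m := by simp [Fin.ext_iff, eq_comm]
  simp [qPoly, coeff_X_pow, h.ne, hlast]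

end qPoly

theorem QPot_lower_bound {d m : ℕ} {t : ℝ} {a : Fin (m + 1) → ℂ} (hdm : m < d) {κ r : ℝ} {w : ℂ}
    (hκ : 0 < κ) (hκ₁ : κ ≤ 1) (hr : 1 ≤ r)
    (hroots : ∀ ζ ∈ (qPoly d m t a).roots, κ * max r ‖ζ‖ ≤ ‖w - ζ‖) :
    κ ^ d * ‖a (Fin.last m)‖ ≤ 2 ^ d * ‖QPot d m t a w‖ := by
  set P := qPoly d m t a
  have hd : P.natDegree ≤ d := natDegree_qPoly_le hdm.le
  have hP := P.pow_mul_norm_coeff_mul_pow_le m (by linarith) hκ.le hroots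
  rw [coeff_qPoly_self hdm] at hP
  rw [QPot_eq_eval_qPoly]
  calc κ ^ d * ‖a (Fin.last m)‖ ≤ κ ^ P.natDegree * ‖a (Fin.last m)‖ :=
        mul_le_mul_of_nonneg_right (pow_le_pow_of_le_one hκ.le hκ₁ hd) (norm_nonneg _)
    _ ≤ κ ^ P.natDegree * ‖a (Fin.last m)‖ * r ^ m :=
        le_mul_of_one_le_right (by positivity) (one_le_pow₀ hr)
    _ ≤ 2 ^ P.natDegree * ‖P.eval w‖ := hP
    _ ≤ 2 ^ d * ‖P.eval w‖ := by gcongr; norm_num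

theorem liouvilleIntegrand_QPot_le {d m : ℕ} {t : ℝ} {a : Fin (m + 1) → ℂ} (hdm : m ≤ d)
    {κ r c : ℝ} {w : ℂ} (hκ : 0 < κ) (hr : 0 < r) (hc : 0 < c) (hcQ : c ≤ ‖QPot d m t a w‖)
    (hroots : ∀ ζ ∈ (qPoly d m t a).roots, κ * r ≤ ‖w - ζ‖) :
    liouvilleIntegrand (QPot d m t a) w ≤ (2 ^ (d + 1) / κ) ^ 2 * c ^ (-(1 / 2 : ℝ)) / r ^ 2 := by
  set P := qPoly d m t a
  have hd : P.natDegree ≤ d := natDegree_qPoly_le hdm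
  have hκr : 0 < κ * r := by positivity
  rw [QPot_eq_eval_qPoly] at hcQ ⊢
  refine (liouvilleIntegrand_le hc hcQ (P.norm_deriv_eval_le hd hκr hroots)
    (P.norm_deriv_deriv_eval_le hd hκr hroots)).trans_eq ?_
  field_simp

theorem uniform_integral_bound
    (d m : ℕ) (hdm : m < d)
    (K : Set (Fin (m + 1) → ℂ)) (hK : IsCompact K)
    (hKm : ∀ a ∈ K, a (Fin.last m) ≠ 0)
    (θ δ R : ℝ) (hδ : 0 < δ)
    (hroots : ∀ t ∈ Set.Icc (0 : ℝ) 1, ∀ a ∈ K, ∀ z : ℂ,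
      QPot d m t a z = 0 → R < Norm.norm z →
      ¬ ∃ ρ φ : ℝ, ∃ k : ℤ, 0 < ρ ∧ |φ - θ - 2 * Real.pi * (k : ℝ)| < δ ∧
        z = (ρ : ℂ) * Complex.exp ((φ : ℂ) * Complex.I)) :
    ∃ b : ℝ, R < b ∧ ∀ t ∈ Set.Icc (0 : ℝ) 1, ∀ a ∈ K,
      (∀ r : ℝ, b ≤ r →
        QPot d m t a ((r : ℂ) * Complex.exp ((θ : ℂ) * Complex.I)) ≠ 0) ∧
      (∫⁻ r in Set.Ioi b, ENNReal.ofReal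
          (Norm.norm
            ((5 / 16) * (deriv (QPot d m t a) ((r : ℂ) * Complex.exp ((θ : ℂ) * Complex.I)) /
                QPot d m t a ((r : ℂ) * Complex.exp ((θ : ℂ) * Complex.I))) ^ 2 -
             (1 / 4) * deriv (deriv (QPot d m t a))
                ((r : ℂ) * Complex.exp ((θ : ℂ) * Complex.I)) /
                QPot d m t a ((r : ℂ) * Complex.exp ((θ : ℂ) * Complex.I))) *
            (Norm.norm (QPot d m t a ((r : ℂ) * Complex.exp ((θ : ℂ) * Complex.I))))
              ^ (-(1 / 2 : ℝ))))
        < ENNReal.ofReal (1 / 2) := by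
  obtain ⟨c₀, hc₀, hc₀K⟩ := hK.exists_forall_le' (continuous_apply (Fin.last m)).norm.continuousOn
    fun a ha ↦ norm_pos_iff.2 (hKm a ha)
  obtain ⟨κ, hκ, hκ₁, hsep⟩ := exists_forall_mul_max_le_norm_sub hδ
  set c := κ ^ d * c₀ / 2 ^ d
  set C := (2 ^ (d + 1) / κ) ^ 2 * c ^ (-(1 / 2 : ℝ))
  have hc : 0 < c := by positivity
  have hC₀ : 0 ≤ C := by positivity
  have hray : ∀ t ∈ Set.Icc (0 : ℝ) 1, ∀ a ∈ K, ∀ r : ℝ, 1 ≤ r → 2 * R ≤ r →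
      c ≤ ‖QPot d m t a (r * exp (θ * I))‖ ∧
        liouvilleIntegrand (QPot d m t a) (r * exp (θ * I)) ≤ C / r ^ 2 := by
    intro t ht a ha r hr hRr
    have hP : ∀ ζ ∈ (qPoly d m t a).roots, κ * max r ‖ζ‖ ≤ ‖r * exp (θ * I) - ζ‖ :=
      fun ζ hζ ↦ hsep θ R r ζ (by linarith) hRr <| hroots t ht a ha ζ <| by
        rw [QPot_eq_eval_qPoly]; exact (mem_roots'.1 hζ).2
    have hlow : c ≤ ‖QPot d m t a (r * exp (θ * I))‖ := by
      rw [div_le_iff₀' (by positivity)]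
      exact (mul_le_mul_of_nonneg_left (hc₀K a ha) (by positivity)).trans
        (QPot_lower_bound hdm hκ hκ₁ hr hP)
    exact ⟨hlow, liouvilleIntegrand_QPot_le hdm.le hκ (by linarith) hc hlow fun ζ hζ ↦
      (mul_le_mul_of_nonneg_left (le_max_left _ _) hκ.le).trans (hP ζ hζ)⟩
  set b := 2 * (|R| + C + 1) with hb_def
  have hb₁ : 1 ≤ b := by linarith [abs_nonneg R]
  have hRb : 2 * R ≤ b := by linarith [le_abs_self R]
  refine ⟨b, by linarith [abs_nonneg R, le_abs_self R], fun t ht a ha ↦ ⟨fun r hr hQ ↦ ?_, ?_⟩⟩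
  · have := (hray t ht a ha r (hb₁.trans hr) (hRb.trans hr)).1
    rw [hQ, norm_zero] at this
    linarith
  · calc _ ≤ ENNReal.ofReal (C / b) := setLIntegral_Ioi_ofReal_le_div (by linarith) hC₀
          fun r hr ↦ (hray t ht a ha r (hb₁.trans hr.out.le) (hRb.trans hr.out.le)).2
      _ < ENNReal.ofReal (1 / 2) := by
          rw [ENNReal.ofReal_lt_ofReal_iff (by norm_num), div_lt_iff₀ (by linarith)]
          linarith [abs_nonneg R]
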